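/- arXiv:1511.03568 — 2 statements merged into one kernel-verified Lean document; each statement's English description precedes it below -/
import Mathlib

section
/- Let G be a strongly connected Eulerian digraph, let T be a minimum cardinality turnback arc set of G, and let x be the indegree vector of the digraph (V, T). Then dist(x) = 0 and dist(d⁻ − x) = 0; consequently dist(x) − dist(d⁻ − x) = minfas(G) − deg(x), and for y = d⁻ − x, dist(y) − dist(d⁻ − y) = |E(G)| − minfas(G) − deg(y). -/
open Finset

variable {V : Type} [Fintype V] [DecidableEq V]

/-- The outdegree of a vertex `v` in the multidigraph with multiplicity function `m`
(`m u v` is the number of directed edges from `u` to `v`). -/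
def outdeg (m : V → V → ℕ) (v : V) : ℤ := ∑ u, (m v u : ℤ)

/-- The indegree of a vertex. -/
def indeg (m : V → V → ℕ) (v : V) : ℤ := ∑ u, (m u v : ℤ)

/-- The digraph is loopless. -/
def Loopless (m : V → V → ℕ) : Prop := ∀ v, m v v = 0

/-- The digraph is strongly connected: every vertex reaches every vertex on a directed path. -/
def StronglyConnected (m : V → V → ℕ) : Prop :=
  ∀ u v : V, Relation.ReflTransGen (fun a b => 0 < m a b) u v

/-- Firing vertex `v` in chip-distribution `x`: `v` sends a chip along each outgoing edge. -/
def fire (m : V → V → ℕ) (x : V → ℤ) (v : V) : V → ℤ :=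
  fun u => x u + (m v u : ℤ) - (if u = v then outdeg m v else 0)

/-- The degree (total number of chips) of a chip-distribution / divisor. -/
def degSum (x : V → ℤ) : ℤ := ∑ v, x v

/-- The state of the chip-firing game after `n` steps, starting from `x` and
firing the vertices `s 0, s 1, …` in this order. -/
def gameState (m : V → V → ℕ) (x : V → ℤ) (s : ℕ → V) : ℕ → (V → ℤ)
  | 0 => x
  | n + 1 => fire m (gameState m x s n) (s n)

/-- `s` encodes an infinite legal chip-firing game starting from `x`:
at each step the fired vertex is active. -/
def InfGame (m : V → V → ℕ) (x : V → ℤ) (s : ℕ → V) : Prop :=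
  ∀ n, outdeg m (s n) ≤ gameState m x s n (s n)

/-- A chip-distribution is terminating if no infinite legal game starts from it. -/
def Terminating (m : V → V → ℕ) (x : V → ℤ) : Prop :=
  ¬ ∃ s : ℕ → V, InfGame m x s

/-- The Laplacian of the digraph applied to `z`. -/
def lap (m : V → V → ℕ) (z : V → ℤ) : V → ℤ :=
  fun u => (∑ v, (m v u : ℤ) * z v) - outdeg m u * z u

/-- Linear equivalence: `x ∼ y` iff `x = y + L z` for some integer vector `z`. -/
def LinEquiv (m : V → V → ℕ) (x y : V → ℤ) : Prop :=
  ∃ z : V → ℤ, x = y + lap m z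

/-- The distance of `x` from the non-terminating distributions:
the minimum degree of a nonnegative `y` such that `x + y` is non-terminating. -/
noncomputable def chipDist (m : V → V → ℕ) (x : V → ℤ) : ℕ :=
  sInf {n : ℕ | ∃ y : V → ℤ, 0 ≤ y ∧ degSum y = (n : ℤ) ∧ ¬ Terminating m (x + y)}

/-- A multidigraph (given by its multiplicity function) is acyclic if it has no directed cycle,
i.e. no vertex can reach itself by a directed walk of positive length. -/
def AcyclicMul (k : V → V → ℕ) : Prop :=
  ∀ v : V, ¬ Relation.TransGen (fun a b => 0 < k a b) v v

/-- The minimum cardinality of a feedback arc set. -/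
noncomputable def minfas (m : V → V → ℕ) : ℕ :=
  sInf {n : ℕ | ∃ F : V → V → ℕ, (∀ u v, F u v ≤ m u v) ∧
    AcyclicMul (fun u v => m u v - F u v) ∧ ∑ u, ∑ v, F u v = n}

/-!
Reversing the arcs of `T` leaves an acyclic digraph; in a topological order `g` of it the arcs of
`T` are exactly the arcs of `G` pointing backwards, so `x v` counts the arcs entering `v` from
later vertices and `d⁻ - x` those entering from earlier ones. Firing every vertex once in the
order `g` is legal, since each vertex then holds exactly `d⁻ v = d⁺ v` chips, and returns to `x`
because `G` is Eulerian; so `x` is non-terminating and `dist x = 0`, and reading the order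
backwards gives the same for `d⁻ - x`. Finally, for a minimum feedback arc set `F`, the backward
arcs of a topological order of `G - F` form a turnback arc set contained in `F`, whence
`minfas G = |T| = deg x`.
-/

section TopologicalOrder

variable {V : Type}

theorem AcyclicMul.mono {k k' : V → V → ℕ} (hk : AcyclicMul k)
    (hk' : ∀ u v, 0 < k' u v → 0 < k u v) : AcyclicMul k' :=
  fun v hv => hk v (Relation.TransGen.mono hk' v v hv)

theorem acyclicMul_of_lt {α : Type*} [Preorder α] {k : V → V → ℕ} (f : V → α)
    (hf : ∀ u v, 0 < k u v → f u < f v) : AcyclicMul k := fun v hv =>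
  lt_irrefl (f v) <| by
    simpa only [Relation.transGen_eq_self] using Relation.TransGen.lift f (p := (· < ·)) hf v v hv

theorem exists_equiv_fin_of_lt [Fintype V] {α : Type*} [LinearOrder α] (d : V → α) :
    ∃ g : V ≃ Fin (Fintype.card V), ∀ u v, d u < d v → g u < g v := by
  let key : V → α ×ₗ Fin (Fintype.card V) := fun v => toLex (d v, Fintype.equivFin V v)
  have hkey : Function.Injective key := fun u v h =>
    (Fintype.equivFin V).injective (congrArg Prod.snd (toLex.injective h))
  let _ : LinearOrder V := LinearOrder.lift' key hkey
  refine ⟨(Fintype.orderIsoFinOfCardEq V rfl).symm.toEquiv, fun u v h => ?_⟩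
  have hkey_lt : key u < key v := Prod.Lex.toLex_lt_toLex.2 (Or.inl h)
  exact (Fintype.orderIsoFinOfCardEq V rfl).symm.lt_iff_lt.2 hkey_lt

theorem AcyclicMul.exists_equiv_fin [Fintype V] {k : V → V → ℕ} (hk : AcyclicMul k) :
    ∃ g : V ≃ Fin (Fintype.card V), ∀ u v, 0 < k u v → g u < g v := by
  let ancestors : V → Set V := fun v => {u | Relation.TransGen (fun a b => 0 < k a b) u v}
  refine (exists_equiv_fin_of_lt fun v => (ancestors v).ncard).imp fun g hg u v huv => hg u v ?_
  refine Set.ncard_lt_ncard ⟨fun w hw => Relation.TransGen.tail hw huv, fun h => ?_⟩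
  exact hk u (h (Relation.TransGen.single huv))

end TopologicalOrder

section BackArcs

variable {V : Type} {α : Type*} [LinearOrder α]

def backArcs (m : V → V → ℕ) (f : V → α) : V → V → ℕ :=
  fun u v => if f v < f u then m u v else 0

variable {m : V → V → ℕ} {f : V → α}

theorem backArcs_le (u v : V) : backArcs m f u v ≤ m u v := by
  unfold backArcs
  split_ifs <;> omega

theorem backArcs_le_of_lt {F : V → V → ℕ} (hF : ∀ u v, 0 < m u v - F u v → f u < f v)
    (u v : V) : backArcs m f u v ≤ F u v := by
  unfold backArcs
  split_ifs with hvu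
  · by_contra! hFm
    exact lt_asymm hvu (hF u v (by omega))
  · exact Nat.zero_le _

theorem eq_backArcs_of_acyclic_reversal {T : V → V → ℕ} (hT : ∀ u v, T u v ≤ m u v)
    (hf : ∀ u v, 0 < m u v - T u v + T v u → f u < f v) : T = backArcs m f := by
  funext u v
  refine le_antisymm ?_ (backArcs_le_of_lt (fun u v h => hf u v (by omega)) u v)
  unfold backArcs
  split_ifs with hvu
  · exact hT u v
  · by_contra! hTpos
    exact hvu (hf v u (by omega))

theorem backArcs_add_backArcs (hloop : Loopless m) (hf : Function.Injective f) {β : Type*}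
    [LinearOrder β] {f' : V → β} (hff' : ∀ u v, f' u < f' v ↔ f v < f u) (u v : V) :
    backArcs m f u v + backArcs m f' u v = m u v := by
  simp only [backArcs, hff']
  rcases lt_trichotomy (f u) (f v) with huv | huv | huv
  · simp [huv, huv.not_gt]
  · simp [hf huv, hloop v]
  · simp [huv, huv.not_gt]

theorem acyclicMul_reversal_backArcs (hloop : Loopless m) (hf : Function.Injective f) :
    AcyclicMul (fun u v => m u v - backArcs m f u v + backArcs m f v u) := by
  refine acyclicMul_of_lt f fun u v huv => ?_
  by_contra hnlt
  have hvu : backArcs m f v u = 0 := if_neg hnlt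
  rcases (not_lt.1 hnlt).lt_or_eq with hlt | heq
  · have : backArcs m f u v = m u v := if_pos hlt
    omega
  · cases hf heq
    simp [backArcs, hloop u] at huv

end BackArcs

section MinFAS

variable {V : Type} [Fintype V]

theorem minfas_le {m F : V → V → ℕ} (hF : ∀ u v, F u v ≤ m u v)
    (hac : AcyclicMul (fun u v => m u v - F u v)) : minfas m ≤ ∑ u, ∑ v, F u v :=
  Nat.sInf_le ⟨F, hF, hac, rfl⟩

theorem exists_feedback_arc_set_card_eq_minfas (m : V → V → ℕ) :
    ∃ F : V → V → ℕ, (∀ u v, F u v ≤ m u v) ∧ AcyclicMul (fun u v => m u v - F u v) ∧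
      ∑ u, ∑ v, F u v = minfas m := by
  have hm : AcyclicMul (fun u v => m u v - m u v) := fun v hv => by cases hv <;> simp_all
  exact Nat.sInf_mem (s := {n | ∃ F : V → V → ℕ, (∀ u v, F u v ≤ m u v) ∧
    AcyclicMul (fun u v => m u v - F u v) ∧ ∑ u, ∑ v, F u v = n}) ⟨_, m, fun _ _ => le_rfl, hm, rfl⟩

theorem minfas_eq_of_isLeast_turnback {m T : V → V → ℕ} (hloop : Loopless m)
    (hT : ∀ u v, T u v ≤ m u v) (hTturn : AcyclicMul (fun u v => m u v - T u v + T v u))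
    (hTmin : ∀ T' : V → V → ℕ, (∀ u v, T' u v ≤ m u v) →
        AcyclicMul (fun u v => m u v - T' u v + T' v u) →
        ∑ u, ∑ v, T u v ≤ ∑ u, ∑ v, T' u v) :
    minfas m = ∑ u, ∑ v, T u v := by
  refine le_antisymm (minfas_le hT (hTturn.mono fun u v h => by omega)) ?_
  obtain ⟨F, -, hFac, hFcard⟩ := exists_feedback_arc_set_card_eq_minfas m
  obtain ⟨g, hg⟩ := hFac.exists_equiv_fin
  calc ∑ u, ∑ v, T u v
      ≤ ∑ u, ∑ v, backArcs m g u v :=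
        hTmin _ backArcs_le (acyclicMul_reversal_backArcs hloop g.injective)
    _ ≤ ∑ u, ∑ v, F u v := by
        gcongr with u _ v _
        exact backArcs_le_of_lt hg u v
    _ = minfas m := hFcard

end MinFAS

section ChipFiring

variable {V : Type} [Fintype V] {m : V → V → ℕ}

theorem fire_eq_add_lap_single [DecidableEq V] (x : V → ℤ) (w : V) :
    fire m x w = x + lap m (Pi.single w 1) := by
  funext u
  simp only [fire, lap, Pi.add_apply, Pi.single_apply, mul_ite, mul_one, mul_zero,
    Finset.sum_ite_eq', Finset.mem_univ, if_true]
  split_ifs with huw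
  · rw [huw]
    ring
  · ring

theorem lap_add (z z' : V → ℤ) : lap m (z + z') = lap m z + lap m z' := by
  funext u
  simp only [lap, Pi.add_apply, mul_add, Finset.sum_add_distrib]
  ring

theorem lap_const (heul : ∀ v, outdeg m v = indeg m v) (c : ℤ) : lap m (fun _ => c) = 0 := by
  funext u
  simp [lap, ← Finset.sum_mul, heul, indeg]

theorem gameState_periodic [DecidableEq V] {x : V → ℤ} {s : ℕ → V} {N : ℕ}
    (hs : Function.Periodic s N) (hx : gameState m x s N = x) :
    Function.Periodic (gameState m x s) N := by
  intro n
  induction n with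
  | zero => simpa [gameState] using hx
  | succ n ih => rw [Nat.add_right_comm, gameState, gameState, ih, hs]

theorem not_terminating_of_periodic [DecidableEq V] {x : V → ℤ} {s : ℕ → V} {N : ℕ}
    (hN : 0 < N) (hs : Function.Periodic s N) (hx : gameState m x s N = x)
    (hlegal : ∀ n < N, outdeg m (s n) ≤ gameState m x s n (s n)) : ¬ Terminating m x := by
  refine not_not.2 ⟨s, fun n => ?_⟩
  rw [← hs.map_mod_nat n, ← (gameState_periodic hs hx).map_mod_nat n]
  exact hlegal _ (Nat.mod_lt n hN)

theorem chipDist_eq_zero_of_not_terminating [DecidableEq V] {x : V → ℤ}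
    (hx : ¬ Terminating m x) : chipDist m x = 0 :=
  Nat.sInf_eq_zero.2 (Or.inl ⟨0, le_rfl, by simp [degSum], by simpa using hx⟩)

end ChipFiring

section Sharpness

variable {V : Type} [Fintype V] {m : V → V → ℕ}

theorem degSum_indeg (k : V → V → ℕ) : degSum (indeg k) = ∑ u, ∑ v, (k u v : ℤ) :=
  Finset.sum_comm

theorem indeg_backArcs_add_indeg_backArcs {α β : Type*} [LinearOrder α] [LinearOrder β]
    (hloop : Loopless m) {f : V → α} (hf : Function.Injective f) {f' : V → β}
    (hff' : ∀ u v, f' u < f' v ↔ f v < f u) (v : V) :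
    indeg (backArcs m f) v + indeg (backArcs m f') v = indeg m v := by
  rw [indeg, indeg, indeg, ← Finset.sum_add_distrib]
  exact Finset.sum_congr rfl fun u _ => by exact_mod_cast backArcs_add_backArcs hloop hf hff' u v

theorem not_terminating_indeg_backArcs [DecidableEq V] [Nonempty V] (hloop : Loopless m)
    (heul : ∀ v, outdeg m v = indeg m v) {N : ℕ} (g : V ≃ Fin N) :
    ¬ Terminating m (indeg (backArcs m g)) := by
  have hN : 0 < N := (g (Classical.arbitrary V)).pos
  let s : ℕ → V := fun n => g.symm ⟨n % N, Nat.mod_lt n hN⟩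
  let fired : ℕ → V → ℤ := fun r u => if (g u : ℕ) < r then 1 else 0
  have hs : Function.Periodic s N := fun n => by simp only [s, Nat.add_mod_right]
  have hs_of_lt : ∀ r (hr : r < N), s r = g.symm ⟨r, hr⟩ := fun r hr => by
    simp [s, Nat.mod_eq_of_lt hr]
  have hstate : ∀ r ≤ N, gameState m (indeg (backArcs m g)) s r
      = indeg (backArcs m g) + lap m (fired r) := by
    intro r hr
    induction r with
    | zero => simpa [gameState, fired] using lap_const heul 0
    | succ r ih =>
      have hfired : fired (r + 1) = fired r + Pi.single (s r) 1 := by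
        funext u
        rw [hs_of_lt r (by omega)]
        simp only [fired, Pi.add_apply, Pi.single_apply, Equiv.eq_symm_apply, Fin.ext_iff]
        omega
      rw [gameState, ih (by omega), fire_eq_add_lap_single, hfired, lap_add, add_assoc]
  refine not_terminating_of_periodic hN hs ?_ fun n hn => ?_
  · have hfired : fired N = fun _ => 1 := funext fun u => if_pos (g u).isLt
    rw [hstate N le_rfl, hfired, lap_const heul, add_zero]
  · have hchips : lap m (fired n) (g.symm ⟨n, hn⟩)
        = indeg (backArcs m (OrderDual.toDual ∘ g)) (g.symm ⟨n, hn⟩) := by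
      simp [lap, fired, indeg, backArcs, Fin.lt_def]
    rw [hstate n hn.le, hs_of_lt n hn, Pi.add_apply, hchips,
      indeg_backArcs_add_indeg_backArcs hloop g.injective (fun _ _ => OrderDual.toDual_lt_toDual),
      heul]

end Sharpness

theorem weak_riemann_roch_sharp_general
    {V : Type} [Fintype V] [DecidableEq V] [Nonempty V]
    (m : V → V → ℕ) (hloop : Loopless m)
    (heul : ∀ v, outdeg m v = indeg m v)
    (T : V → V → ℕ) (hT : ∀ u v, T u v ≤ m u v)
    (hTturn : AcyclicMul (fun u v => m u v - T u v + T v u))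
    (hTmin : ∀ T' : V → V → ℕ, (∀ u v, T' u v ≤ m u v) →
        AcyclicMul (fun u v => m u v - T' u v + T' v u) →
        ∑ u, ∑ v, T u v ≤ ∑ u, ∑ v, T' u v) :
    chipDist m (fun v => ∑ u, (T u v : ℤ)) = 0 ∧
    chipDist m (fun v => indeg m v - ∑ u, (T u v : ℤ)) = 0 ∧
    (chipDist m (fun v => ∑ u, (T u v : ℤ)) : ℤ)
        - (chipDist m (fun v => indeg m v - ∑ u, (T u v : ℤ)) : ℤ)
      = (minfas m : ℤ) - degSum (fun v => ∑ u, (T u v : ℤ)) ∧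
    (chipDist m (fun v => indeg m v - ∑ u, (T u v : ℤ)) : ℤ)
        - (chipDist m (fun v => indeg m v - (indeg m v - ∑ u, (T u v : ℤ))) : ℤ)
      = (∑ u, ∑ v, (m u v : ℤ)) - (minfas m : ℤ)
          - degSum (fun v => indeg m v - ∑ u, (T u v : ℤ)) := by
  obtain ⟨g, hg⟩ := hTturn.exists_equiv_fin
  have hTg : T = backArcs m g := eq_backArcs_of_acyclic_reversal hT hg
  have hy : (fun v => indeg m v - ∑ u, (T u v : ℤ)) = indeg (backArcs m (g.trans Fin.revPerm)) :=
    funext fun v => by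
      rw [← indeg_backArcs_add_indeg_backArcs hloop g.injective (f' := g.trans Fin.revPerm)
        (fun _ _ => Fin.rev_lt_rev) v, hTg, indeg, add_sub_cancel_left]
  have hx0 : chipDist m (fun v => ∑ u, (T u v : ℤ)) = 0 := by
    rw [hTg]
    exact chipDist_eq_zero_of_not_terminating (not_terminating_indeg_backArcs hloop heul g)
  have hy0 : chipDist m (fun v => indeg m v - ∑ u, (T u v : ℤ)) = 0 := by
    rw [hy]
    exact chipDist_eq_zero_of_not_terminating (not_terminating_indeg_backArcs hloop heul _)
  have hminfas : (minfas m : ℤ) = degSum (fun v => ∑ u, (T u v : ℤ)) := by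
    rw [minfas_eq_of_isLeast_turnback hloop hT hTturn hTmin]
    push_cast
    exact (degSum_indeg T).symm
  have hdeg_y : degSum (fun v => indeg m v - ∑ u, (T u v : ℤ))
      = ∑ u, ∑ v, (m u v : ℤ) - degSum (fun v => ∑ u, (T u v : ℤ)) := by
    rw [← degSum_indeg]
    exact Finset.sum_sub_distrib _ _
  exact ⟨hx0, hy0, by simp [hx0, hy0, hminfas], by simp [hx0, hy0, hminfas, hdeg_y]⟩

/-- Sharpness of the weak Riemann–Roch theorem: if `T` is a minimum cardinality turnback
arc set with indegree vector `x`, then `dist(x) = 0` and `dist(d⁻ - x) = 0`; consequently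
`dist(x) - dist(d⁻ - x) = minfas(G) - deg(x)`, and for `y = d⁻ - x`,
`dist(y) - dist(d⁻ - y) = |E(G)| - minfas(G) - deg(y)`. -/
theorem weak_riemann_roch_sharp
    {V : Type} [Fintype V] [DecidableEq V] [Nonempty V]
    (m : V → V → ℕ) (hloop : Loopless m) (hconn : StronglyConnected m)
    (heul : ∀ v, outdeg m v = indeg m v)
    (T : V → V → ℕ) (hT : ∀ u v, T u v ≤ m u v)
    (hTturn : AcyclicMul (fun u v => m u v - T u v + T v u))
    (hTmin : ∀ T' : V → V → ℕ, (∀ u v, T' u v ≤ m u v) →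
        AcyclicMul (fun u v => m u v - T' u v + T' v u) →
        ∑ u, ∑ v, T u v ≤ ∑ u, ∑ v, T' u v) :
    chipDist m (fun v => ∑ u, (T u v : ℤ)) = 0 ∧
    chipDist m (fun v => indeg m v - ∑ u, (T u v : ℤ)) = 0 ∧
    (chipDist m (fun v => ∑ u, (T u v : ℤ)) : ℤ)
        - (chipDist m (fun v => indeg m v - ∑ u, (T u v : ℤ)) : ℤ)
      = (minfas m : ℤ) - degSum (fun v => ∑ u, (T u v : ℤ)) ∧
    (chipDist m (fun v => indeg m v - ∑ u, (T u v : ℤ)) : ℤ)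
        - (chipDist m (fun v => indeg m v - (indeg m v - ∑ u, (T u v : ℤ))) : ℤ)
      = (∑ u, ∑ v, (m u v : ℤ)) - (minfas m : ℤ)
          - degSum (fun v => indeg m v - ∑ u, (T u v : ℤ)) :=
  weak_riemann_roch_sharp_general m hloop heul T hT hTturn hTmin
end

section
/- Let G be a strongly connected digraph having the Riemann–Roch property, i.e., there exist a chip-distribution K and an integer t such that dist(x) − dist(K − x) = t − deg(x) for every chip-distribution x. Then every minimally non-terminating chip-distribution on G has degree equal to dist(0), where 0 denotes the all-zero chip-distribution. -/
/-!
A minimally non-terminating `x` has `dist x = 0`, so Riemann–Roch gives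
`deg x = t + dist (K - x)`. If `dist (K - x) > 0`, one extra chip at a suitable `v` lowers it, and
Riemann–Roch at `x - 1_v` then forces `dist (x - 1_v) = 0`, contradicting minimality; hence
`deg x = t`. Riemann–Roch at `0` gives `dist 0 = t + dist K ≥ t`. Conversely, on a strongly
connected digraph every vertex fires infinitely often in an infinite legal game, and once every
vertex has fired the configuration is non-negative; it is still non-terminating and has degree
`deg x`, so `dist 0 ≤ deg x`.
-/

open Finset

variable {V : Type} [Fintype V] [DecidableEq V]

/-- A chip-distribution is minimally non-terminating if it is non-terminating
but removing one chip from any vertex makes it terminating. -/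
def MinNonTerm (m : V → V → ℕ) (x : V → ℤ) : Prop :=
  ¬ Terminating m x ∧
    ∀ v : V, Terminating m (fun u => x u - (if u = v then 1 else 0))

open Filter

lemma Relation.ReflTransGen.exists_rel_of_pred_of_not_pred {α : Type*} {r : α → α → Prop}
    {p : α → Prop} {a b : α} (h : Relation.ReflTransGen r a b) (ha : p a) (hb : ¬ p b) :
    ∃ c d, p c ∧ ¬ p d ∧ r c d := by
  induction h with
  | refl => exact absurd ha hb
  | @tail c d _ hcd ih =>
    by_cases hc : p c
    · exact ⟨c, d, hc, hb, hcd⟩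
    · exact ih hc

lemma not_eventually_le_of_frequently_lt {f : ℕ → ℤ}
    (hmono : ∀ᶠ n in atTop, f n ≤ f (n + 1)) (hinc : ∃ᶠ n in atTop, f n < f (n + 1)) (C : ℤ) :
    ¬ ∀ᶠ n in atTop, f n ≤ C := by
  intro hC
  obtain ⟨N, hN⟩ := eventually_atTop.1 (hmono.and hC)
  have hmon : MonotoneOn f (Set.Ici N) :=
    monotoneOn_nat_Ici_of_le_succ fun n hn => (hN n hn).1
  have hgrow : ∀ k : ℕ, ∃ n ≥ N, f N + k ≤ f n := by
    intro k
    induction k with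
    | zero => exact ⟨N, le_rfl, by simp⟩
    | succ k ih =>
      obtain ⟨n, hn, hk⟩ := ih
      obtain ⟨p, hlt, hp⟩ := (hinc.and_eventually (eventually_ge_atTop n)).exists
      have hnp : f n ≤ f p := hmon (Set.mem_Ici.2 hn) (Set.mem_Ici.2 (hn.trans hp)) hp
      exact ⟨p + 1, by omega, by push_cast; omega⟩
  obtain ⟨n, hn, hk⟩ := hgrow (C - f N + 1).toNat
  have := (hN n hn).2
  omega

lemma degSum_single (v : V) : degSum (Pi.single v (1 : ℤ)) = 1 := by
  simp [degSum]

omit [DecidableEq V] in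
lemma degSum_nonneg {y : V → ℤ} (hy : 0 ≤ y) : 0 ≤ degSum y :=
  sum_nonneg fun v _ => hy v

omit [DecidableEq V] in
lemma degSum_sub (x y : V → ℤ) : degSum (x - y) = degSum x - degSum y := by
  simp only [degSum, Pi.sub_apply, sum_sub_distrib]

section Firing

variable (m : V → V → ℕ)

lemma fire_add (x c : V → ℤ) (v : V) : fire m (x + c) v = fire m x v + c := by
  funext u
  simp only [fire, Pi.add_apply]
  ring

lemma gameState_add (x c : V → ℤ) (s : ℕ → V) (n : ℕ) :
    gameState m (x + c) s n = gameState m x s n + c := by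
  induction n with
  | zero => rfl
  | succ n ih => simp only [gameState, ih, fire_add]

lemma gameState_add_steps (x : V → ℤ) (s : ℕ → V) (n k : ℕ) :
    gameState m x s (n + k) = gameState m (gameState m x s n) (fun i => s (n + i)) k := by
  induction k with
  | zero => rfl
  | succ k ih => rw [← Nat.add_assoc, gameState, ih]; rfl

lemma degSum_fire (x : V → ℤ) (v : V) : degSum (fire m x v) = degSum x := by
  simp only [degSum, fire, sum_sub_distrib, sum_add_distrib, sum_ite_eq', mem_univ, if_true,
    outdeg]
  ring

lemma degSum_gameState (x : V → ℤ) (s : ℕ → V) (n : ℕ) :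
    degSum (gameState m x s n) = degSum x := by
  induction n with
  | zero => rfl
  | succ n ih => rw [gameState, degSum_fire, ih]

lemma sum_fire_of_notMem {T : Finset V} {v : V} (hv : v ∉ T) (x : V → ℤ) :
    ∑ u ∈ T, fire m x v u = ∑ u ∈ T, x u + ∑ u ∈ T, (m v u : ℤ) := by
  rw [← sum_add_distrib]
  refine sum_congr rfl fun u hu => ?_
  rw [fire, if_neg (ne_of_mem_of_not_mem hu hv), sub_zero]

lemma not_terminating_mono {x x' : V → ℤ} (h : x ≤ x') (hx : ¬ Terminating m x) :
    ¬ Terminating m x' := by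
  obtain ⟨s, hs⟩ := not_not.mp hx
  refine not_not.mpr ⟨s, fun n => ?_⟩
  obtain ⟨c, hc, rfl⟩ : ∃ c, 0 ≤ c ∧ x' = x + c := ⟨x' - x, sub_nonneg.2 h, by abel⟩
  rw [gameState_add, Pi.add_apply]
  linarith [hs n, show 0 ≤ c (s n) from hc (s n)]

namespace InfGame

variable {m} {x : V → ℤ} {s : ℕ → V} (hs : InfGame m x s)
include hs

lemma not_terminating_gameState (n : ℕ) : ¬ Terminating m (gameState m x s n) :=
  not_not.mpr ⟨fun i => s (n + i), fun k => by rw [← gameState_add_steps]; exact hs (n + k)⟩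

lemma gameState_nonneg_of_lt {k n : ℕ} (hkn : k < n) : 0 ≤ gameState m x s n (s k) := by
  induction n, hkn using Nat.le_induction with
  | base =>
    have := hs k
    simp only [gameState, fire, if_true]
    omega
  | succ n _ ih =>
    have := hs n
    simp only [gameState, fire]
    split_ifs with h
    · rw [h]
      omega
    · omega

lemma eventually_nonneg_of_frequently {v : V} (hv : ∃ᶠ n in atTop, s n = v) :
    ∀ᶠ n in atTop, 0 ≤ gameState m x s n v := by
  obtain ⟨k, rfl⟩ := hv.exists
  filter_upwards [eventually_gt_atTop k] with n hn using hs.gameState_nonneg_of_lt hn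

lemma frequently_eq (hconn : StronglyConnected m) (v : V) : ∃ᶠ n in atTop, s n = v := by
  classical
  obtain ⟨a, ha⟩ : ∃ a, ∃ᶠ n in atTop, s n = a := by
    by_contra! h
    obtain ⟨n, hn⟩ := (eventually_all.2 h).exists
    exact hn (s n) rfl
  by_contra hv
  obtain ⟨a, b, ha, hb, hab⟩ := (hconn a v).exists_rel_of_pred_of_not_pred
    (p := fun u => ∃ᶠ n in atTop, s n = u) ha hv
  let T : Finset V := univ.filter fun u => ¬ ∃ᶠ n in atTop, s n = u
  have hT : ∀ u, u ∈ T ↔ ¬ ∃ᶠ n in atTop, s n = u := fun u => by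
    simp only [T, mem_filter, mem_univ, true_and]
  -- `τ` counts the chips on rarely firing vertices: eventually it never decreases and grows
  -- whenever `a` fires along `a → b`, but the conserved degree bounds it, since the frequently
  -- firing vertices eventually hold non-negative amounts.
  let τ : ℕ → ℤ := fun n => ∑ u ∈ T, gameState m x s n u
  have hfires : ∀ᶠ n in atTop, s n ∉ T := by
    have : ∀ᶠ n in atTop, ∀ u ∈ T, s n ≠ u := eventually_all.2 fun u => by
      by_cases hu : u ∈ T
      · exact (not_frequently.1 ((hT u).1 hu)).mono fun _ h _ => h
      · exact .of_forall fun _ h => absurd h hu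
    exact this.mono fun n hn hmem => hn (s n) hmem rfl
  have hτ_step : ∀ᶠ n in atTop, τ (n + 1) = τ n + ∑ u ∈ T, (m (s n) u : ℤ) :=
    hfires.mono fun n hn => sum_fire_of_notMem m hn _
  have hτ_le : ∀ᶠ n in atTop, τ n ≤ degSum x := by
    have hnonneg : ∀ᶠ n in atTop, ∀ u ∈ Tᶜ, 0 ≤ gameState m x s n u :=
      eventually_all.2 fun u => by
        by_cases hu : u ∈ T
        · exact .of_forall fun _ hc => absurd hu (mem_compl.1 hc)
        · filter_upwards [hs.eventually_nonneg_of_frequently (not_not.1 ((hT u).not.1 hu))]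
            with n hn using fun _ => hn
    filter_upwards [hnonneg] with n hn
    rw [← degSum_gameState m x s n, degSum, ← sum_add_sum_compl T]
    linarith [sum_nonneg hn]
  have hout_nonneg : ∀ w, 0 ≤ ∑ u ∈ T, (m w u : ℤ) :=
    fun _ => sum_nonneg fun _ _ => by positivity
  refine not_eventually_le_of_frequently_lt (hτ_step.mono fun n hn => ?_) ?_ _ hτ_le
  · linarith [hout_nonneg (s n)]
  · refine (ha.and_eventually hτ_step).mono fun n ⟨hna, hn⟩ => ?_
    have : (1 : ℤ) ≤ ∑ u ∈ T, (m a u : ℤ) :=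
      (by exact_mod_cast hab : (1 : ℤ) ≤ m a b).trans
        (single_le_sum (f := fun u => (m a u : ℤ)) (fun _ _ => by positivity) ((hT b).2 hb))
    rw [hn, hna]
    linarith

end InfGame

lemma exists_nonneg_not_terminating (hconn : StronglyConnected m) {x : V → ℤ}
    (hx : ¬ Terminating m x) :
    ∃ y : V → ℤ, 0 ≤ y ∧ degSum y = degSum x ∧ ¬ Terminating m y := by
  obtain ⟨s, hs⟩ := not_not.mp hx
  obtain ⟨n, hn⟩ := (eventually_all.2 fun v =>
    hs.eventually_nonneg_of_frequently (hs.frequently_eq hconn v)).exists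
  exact ⟨gameState m x s n, hn, degSum_gameState m x s n, hs.not_terminating_gameState n⟩

end Firing

section Distance

variable (m : V → V → ℕ)

lemma chipDist_le {z y : V → ℤ} (hy : 0 ≤ y) (hnt : ¬ Terminating m (z + y)) :
    (chipDist m z : ℤ) ≤ degSum y := by
  have hdeg := degSum_nonneg hy
  have : chipDist m z ≤ (degSum y).toNat := Nat.sInf_le ⟨y, hy, by omega, hnt⟩
  omega

lemma chipDist_eq_zero {z : V → ℤ} (hz : ¬ Terminating m z) : chipDist m z = 0 := by
  have := chipDist_le m le_rfl (by rwa [add_zero])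
  simp only [degSum, Pi.zero_apply, sum_const_zero] at this
  omega

variable {m} {x₀ : V → ℤ} (hx₀ : ¬ Terminating m x₀)
include hx₀

lemma exists_chipDist_eq (z : V → ℤ) :
    ∃ y : V → ℤ, 0 ≤ y ∧ degSum y = chipDist m z ∧ ¬ Terminating m (z + y) := by
  refine Nat.sInf_mem
    (s := {n | ∃ y : V → ℤ, 0 ≤ y ∧ degSum y = (n : ℤ) ∧ ¬ Terminating m (z + y)}) ?_
  let y : V → ℤ := fun v => max (x₀ v - z v) 0
  have hy : 0 ≤ y := fun v => le_max_right _ _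
  refine ⟨(degSum y).toNat, y, hy, (Int.toNat_of_nonneg (degSum_nonneg hy)).symm, ?_⟩
  exact not_terminating_mono m (fun v => by simp only [Pi.add_apply, y]; omega) hx₀

lemma not_terminating_of_chipDist_eq_zero {z : V → ℤ} (hz : chipDist m z = 0) :
    ¬ Terminating m z := by
  obtain ⟨y, hy, hdeg, hnt⟩ := exists_chipDist_eq hx₀ z
  have : y = 0 := funext fun v =>
    (sum_eq_zero_iff_of_nonneg fun u _ => hy u).1 (by rw [← degSum, hdeg, hz]; rfl) v (mem_univ v)
  rwa [this, add_zero] at hnt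

lemma exists_chipDist_add_single_lt {z : V → ℤ} (hz : chipDist m z ≠ 0) :
    ∃ v, chipDist m (z + Pi.single v 1) < chipDist m z := by
  obtain ⟨y, hy, hdeg, hnt⟩ := exists_chipDist_eq hx₀ z
  obtain ⟨v, hv⟩ : ∃ v, y v ≠ 0 := by
    by_contra! h
    rw [show y = 0 from funext h, degSum] at hdeg
    simp at hdeg
    omega
  refine ⟨v, ?_⟩
  have hyv : 0 ≤ y v := hy v
  have hy' : 0 ≤ y - Pi.single v 1 := fun u => by
    by_cases hu : u = v
    · subst hu
      simp only [Pi.zero_apply, Pi.sub_apply, Pi.single_eq_same]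
      omega
    · simpa [hu] using hy u
  have := chipDist_le m hy' (by rwa [add_add_sub_cancel])
  rw [degSum_sub, degSum_single] at this
  omega

end Distance

section RiemannRoch

variable {m : V → V → ℕ} {K : V → ℤ} {t : ℤ}

lemma degSum_eq_of_minNonTerm
    (hRR : ∀ x : V → ℤ, (chipDist m x : ℤ) - (chipDist m (K - x) : ℤ) = t - degSum x)
    {x : V → ℤ} (hx : MinNonTerm m x) : degSum x = t := by
  obtain ⟨hnt, hmin⟩ := hx
  have hx0 := chipDist_eq_zero m hnt
  suffices hK : chipDist m (K - x) = 0 by have := hRR x; omega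
  by_contra hK
  obtain ⟨v, hv⟩ := exists_chipDist_add_single_lt hnt hK
  have hRRv := hRR (x - Pi.single v 1)
  rw [show K - (x - Pi.single v 1) = K - x + Pi.single v 1 by abel, degSum_sub,
    degSum_single] at hRRv
  have hxv : chipDist m (x - Pi.single v 1) = 0 := by have := hRR x; omega
  have hsub : (fun u => x u - if u = v then 1 else 0) = x - Pi.single v 1 := by
    ext u
    simp [Pi.single_apply]
  exact not_terminating_of_chipDist_eq_zero hnt hxv (hsub ▸ hmin v)

end RiemannRoch

theorem minNonTerm_degree_of_RR_general
    {V : Type} [Fintype V] [DecidableEq V]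
    (m : V → V → ℕ) (hconn : StronglyConnected m)
    (hRR : ∃ K : V → ℤ, ∃ t : ℤ,
      ∀ x : V → ℤ, (chipDist m x : ℤ) - (chipDist m (K - x) : ℤ) = t - degSum x)
    (x : V → ℤ) (hx : MinNonTerm m x) :
    degSum x = (chipDist m (0 : V → ℤ) : ℤ) := by
  obtain ⟨K, t, hKt⟩ := hRR
  have hdeg : degSum x = t := degSum_eq_of_minNonTerm hKt hx
  have hlow : t ≤ chipDist m 0 := by
    have := hKt 0
    simp only [degSum, Pi.zero_apply, sum_const_zero, sub_zero] at this
    omega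
  obtain ⟨y, hy, hdy, hnt⟩ := exists_nonneg_not_terminating m hconn hx.1
  have hup := chipDist_le m hy (by rwa [zero_add])
  omega

/-- If a strongly connected digraph has the Riemann–Roch property, then every minimally
non-terminating chip-distribution has degree `dist(0)`. -/
theorem minNonTerm_degree_of_RR
    {V : Type} [Fintype V] [DecidableEq V] [Nonempty V]
    (m : V → V → ℕ) (hloop : Loopless m) (hconn : StronglyConnected m)
    (hRR : ∃ K : V → ℤ, ∃ t : ℤ,
      ∀ x : V → ℤ, (chipDist m x : ℤ) - (chipDist m (K - x) : ℤ) = t - degSum x)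
    (x : V → ℤ) (hx : MinNonTerm m x) :
    degSum x = (chipDist m (0 : V → ℤ) : ℤ) :=
  minNonTerm_degree_of_RR_general m hconn hRR x hx
end
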